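/- (Branch maxima can be computed over the larger scenario set.) Let V' be a subtree with sink x and branches V_1,…,V_t. For the function r'(V'',x:s) = Θ(V'',x:s) − Θ_OPT(s), one has for every branch index ℓ: max over s ∈ S*(V_ℓ∪{x},x) of r'(V_ℓ∪{x},x:s) equals max over s ∈ S*(V',x) of r'(V_ℓ∪{x},x:s). -/
import Mathlib


open scoped Classical
open Finset

/-- Reachability inside a vertex set: a walk whose support stays in `S`. -/
def ReachIn {V : Type*} (G : SimpleGraph V) (S : Set V) (u w : V) : Prop :=
  ∃ p : G.Walk u w, ∀ z ∈ p.support, z ∈ S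

/-- `V'` induces a (nonempty, connected) subtree of the tree `G`. -/
def IsSubtree {V : Type*} (G : SimpleGraph V) (V' : Finset V) : Prop :=
  V'.Nonempty ∧ ∀ u ∈ V', ∀ w ∈ V', ReachIn G (↑V') u w

/-- The branch of `V'` falling off of `x` that contains `v`:
the connected component of `v` in the induced graph on `V' \ {x}`. -/
noncomputable def branchOf {V : Type*} [DecidableEq V] (G : SimpleGraph V)
    (V' : Finset V) (x v : V) : Finset V :=
  (V'.erase x).filter (fun w => ReachIn G (↑(V'.erase x)) v w)

/-- `W(V',x,v':s)`: total weight of vertices of `V'` at distance at least `d(v',x)` from `x`. -/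
noncomputable def Wgt {V : Type*} (d : V → V → ℝ) (V' : Finset V) (x v' : V)
    (s : V → ℝ) : ℝ :=
  ∑ v ∈ V'.filter (fun v => d v' x ≤ d v x), s v

/-- `D(V',x,v') = {v ∈ V' : d(v,x) ≥ d(v',x)}`. -/
noncomputable def Dset {V : Type*} (d : V → V → ℝ) (V' : Finset V) (x v' : V) : Finset V :=
  V'.filter (fun v => d v' x ≤ d v x)

/-- Evacuation time `Θ(B ∪ {x}, x : s)` of a branch `B` (not containing `x`) to the sink
`x`, given by the formula `max_{v' ∈ B : W(B,x,v':s) > 0} (d(v',x) + W(B,x,v':s)/c)`. -/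
noncomputable def ThetaB {V : Type*} (d : V → V → ℝ) (c : ℝ) (B : Finset V) (x : V)
    (s : V → ℝ) : ℝ :=
  (B.filter (fun v' => 0 < Wgt d B x v' s)).fold max 0
    (fun v' => d v' x + Wgt d B x v' s / c)

/-- Evacuation time `Θ(V', x : s)` of a subtree `V'` (with `x ∈ V'`) to the sink `x`:
the maximum over the branches of `V'` falling off of `x` of the branch evacuation time. -/
noncomputable def Theta {V : Type*} [DecidableEq V] (G : SimpleGraph V) (d : V → V → ℝ)
    (c : ℝ) (V' : Finset V) (x : V) (s : V → ℝ) : ℝ :=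
  (V'.erase x).fold max 0 (fun v => ThetaB d c (branchOf G V' x v) x s)

/-- `P ∈ Λ[X]`: `P` is a partition of the vertices into `k` subtrees,
the `i`-th of which contains the sink `X i` (and no other sink). -/
def ValidPartition {V : Type*} (G : SimpleGraph V) {k : ℕ}
    (P : Fin k → Finset V) (X : Fin k → V) : Prop :=
  (∀ i, X i ∈ P i) ∧ (∀ i, IsSubtree G (P i)) ∧ (∀ v : V, ∃! i, v ∈ P i)

/-- `Θ(P,X:s) = max_i Θ(P_i, x_i : s)`. -/
noncomputable def ThetaPart {V : Type*} [DecidableEq V] (G : SimpleGraph V)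
    (d : V → V → ℝ) (c : ℝ) {k : ℕ} (P : Fin k → Finset V) (X : Fin k → V)
    (s : V → ℝ) : ℝ :=
  (Finset.univ : Finset (Fin k)).fold max 0 (fun i => Theta G d c (P i) (X i) s)

/-- `Θ_OPT(s)`: the optimal `k`-sink evacuation time under scenario `s`. -/
noncomputable def ThetaOpt {V : Type*} [DecidableEq V] (G : SimpleGraph V)
    (d : V → V → ℝ) (c : ℝ) (k : ℕ) (s : V → ℝ) : ℝ :=
  sInf {t | ∃ (P : Fin k → Finset V) (X : Fin k → V),
    ValidPartition G P X ∧ t = ThetaPart G d c P X s}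

/-- `s ∈ S = Π_v [w_v^-, w_v^+]`. -/
def InScenarios {V : Type*} (wm wp : V → ℝ) (s : V → ℝ) : Prop :=
  ∀ v, wm v ≤ s v ∧ s v ≤ wp v

/-- `R_max(P,X) = max_{s ∈ S} (Θ(P,X:s) − Θ_OPT(s))`. -/
noncomputable def Rmax {V : Type*} [DecidableEq V] (G : SimpleGraph V)
    (d : V → V → ℝ) (c : ℝ) (wm wp : V → ℝ) {k : ℕ}
    (P : Fin k → Finset V) (X : Fin k → V) : ℝ :=
  sSup {r | ∃ s : V → ℝ, InScenarios wm wp s ∧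
    r = ThetaPart G d c P X s - ThetaOpt G d c k s}

/-- The extreme scenario `s*(U)`: weight `w_v^+` on `U`, `w_v^-` elsewhere. -/
def sStar {V : Type*} [DecidableEq V] (wm wp : V → ℝ) (U : Finset V) : V → ℝ :=
  fun v => if v ∈ U then wp v else wm v

/-- The candidate worst-case scenario set `S*(V',x)`:
`s*(∅)` together with `s*(D(V_j,x,v'))` for every branch `V_j` of `V'` off `x`
and every `v' ∈ V_j`. -/
noncomputable def SStarSet {V : Type*} [DecidableEq V] (G : SimpleGraph V)
    (d : V → V → ℝ) (wm wp : V → ℝ) (V' : Finset V) (x : V) : Set (V → ℝ) :=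
  insert (sStar wm wp ∅)
    {f | ∃ v' ∈ V'.erase x, f = sStar wm wp (Dset d (branchOf G V' x v') x v')}

/-- The relative max-regret `r(V',x) = max_{s ∈ S*(V',x)} (Θ(V',x:s) − Θ_OPT(s))`. -/
noncomputable def rloc {V : Type*} [DecidableEq V] (G : SimpleGraph V)
    (d : V → V → ℝ) (c : ℝ) (k : ℕ) (wm wp : V → ℝ) (V' : Finset V) (x : V) : ℝ :=
  sSup {t | ∃ s ∈ SStarSet G d wm wp V' x, t = Theta G d c V' x s - ThetaOpt G d c k s}

/-- Replace a scenario by `wm` outside of the set `B`. -/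
def restrictTo {V : Type*} [DecidableEq V] (B : Finset V) (s wm : V → ℝ) : V → ℝ :=
  fun v => if v ∈ B then s v else wm v

/-- Evacuation time of `V_u` to the point on edge `(u,v)` at distance `p` beyond `u`. -/
noncomputable def ThetaE {V : Type*} (d : V → V → ℝ) (c : ℝ) (Vu : Finset V) (u : V)
    (s : V → ℝ) (p : ℝ) : ℝ :=
  (Vu.filter (fun v' => 0 < Wgt d Vu u v' s)).fold max 0
    (fun v' => d v' u + p + Wgt d Vu u v' s / c)

section Aux

variable {V : Type*} [DecidableEq V] {G : SimpleGraph V}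

lemma reachIn_mono {S T : Set V} (h : S ⊆ T) {u w : V} (hr : ReachIn G S u w) :
    ReachIn G T u w := by
  obtain ⟨p, hp⟩ := hr
  exact ⟨p, fun z hz => h (hp z hz)⟩

lemma reachIn_symm {S : Set V} {u w : V} (hr : ReachIn G S u w) : ReachIn G S w u := by
  obtain ⟨p, hp⟩ := hr
  exact ⟨p.reverse, fun z hz => hp z (by simpa [SimpleGraph.Walk.support_reverse] using hz)⟩

lemma reachIn_trans {S : Set V} {u v w : V} (h1 : ReachIn G S u v) (h2 : ReachIn G S v w) :
    ReachIn G S u w := by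
  obtain ⟨p, hp⟩ := h1
  obtain ⟨q, hq⟩ := h2
  refine ⟨p.append q, fun z hz => ?_⟩
  rcases (SimpleGraph.Walk.mem_support_append_iff p q).mp hz with h | h
  · exact hp z h
  · exact hq z h

lemma reachIn_prefix {S : Set V} {u w : V} (p : G.Walk u w) (hp : ∀ z ∈ p.support, z ∈ S)
    {z : V} (hz : z ∈ p.support) : ReachIn G S u z :=
  ⟨p.takeUntil z hz, fun y hy => hp y (SimpleGraph.Walk.support_takeUntil_subset p hz hy)⟩

lemma branchOf_subset (V' : Finset V) (x v : V) : branchOf G V' x v ⊆ V'.erase x :=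
  Finset.filter_subset _ _

lemma notMem_branchOf (V' : Finset V) (x v : V) : x ∉ branchOf G V' x v :=
  fun h => (Finset.notMem_erase x V') (branchOf_subset V' x v h)

/-- For `v'` in the branch `B` of `b`, the branch of `v'` inside `insert x B`
coincides with the branch of `v'` inside `V'`. -/
lemma branchOf_insert_eq {V' : Finset V} {x b v' : V}
    (hv' : v' ∈ branchOf G V' x b) :
    branchOf G (insert x (branchOf G V' x b)) x v' = branchOf G V' x v' := by
  set B := branchOf G V' x b with hB
  have hxB : x ∉ B := notMem_branchOf V' x b
  have hBsub : B ⊆ V'.erase x := branchOf_subset V' x b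
  have herase : (insert x B).erase x = B := Finset.erase_insert hxB
  have hbv' : ReachIn G (↑(V'.erase x)) b v' := (Finset.mem_filter.mp hv').2
  ext w
  simp only [branchOf, Finset.mem_filter, herase]
  constructor
  · rintro ⟨hwB, hr⟩
    refine ⟨hBsub hwB, reachIn_mono ?_ hr⟩
    exact fun z hz => by
      have : z ∈ B := by exact_mod_cast hz
      exact_mod_cast hBsub this
  · rintro ⟨hwE, hr⟩
    obtain ⟨p, hp⟩ := hr
    have hzB : ∀ z ∈ p.support, z ∈ B := by
      intro z hz
      have h1 : ReachIn G (↑(V'.erase x)) v' z := reachIn_prefix p hp hz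
      have h2 : ReachIn G (↑(V'.erase x)) b z := reachIn_trans hbv' h1
      have hzE : z ∈ V'.erase x := by exact_mod_cast hp z hz
      simp only [hB, branchOf, Finset.mem_filter]
      exact ⟨hzE, h2⟩
    have hwB : w ∈ B := hzB w p.end_mem_support
    exact ⟨hwB, ⟨p, fun z hz => by exact_mod_cast hzB z hz⟩⟩

/-- Branches of distinct representatives are disjoint from `B` when the
representative is not in `B`. -/
lemma branchOf_disjoint {V' : Finset V} {x b v' : V}
    (hv' : v' ∈ V'.erase x) (hv'B : v' ∉ branchOf G V' x b)
    {w : V} (hw : w ∈ branchOf G V' x v') : w ∉ branchOf G V' x b := by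
  intro hwB
  apply hv'B
  simp only [branchOf, Finset.mem_filter] at hw hwB ⊢
  exact ⟨hv', reachIn_trans hwB.2 (reachIn_symm hw.2)⟩

lemma fold_max_nonneg {α : Type*} (s : Finset α) (f : α → ℝ) :
    (0 : ℝ) ≤ s.fold max 0 f := by
  rw [Finset.le_fold_max]; exact Or.inl le_rfl

lemma fold_max_mono {α : Type*} (s : Finset α) (f g : α → ℝ) (h : ∀ a ∈ s, f a ≤ g a) :
    s.fold max 0 f ≤ s.fold max 0 g := by
  rw [Finset.fold_max_le]
  refine ⟨fold_max_nonneg s g, fun a ha => le_trans (h a ha) ?_⟩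
  rw [Finset.le_fold_max]; exact Or.inr ⟨a, ha, le_rfl⟩

lemma Wgt_mono {d : V → V → ℝ} {W : Finset V} {x v' : V} {s s' : V → ℝ}
    (h : ∀ v, s v ≤ s' v) : Wgt d W x v' s ≤ Wgt d W x v' s' :=
  Finset.sum_le_sum fun v _ => h v

lemma ThetaB_mono {d : V → V → ℝ} {c : ℝ} (hc : 0 < c) {B : Finset V} {x : V}
    {s s' : V → ℝ} (h : ∀ v, s v ≤ s' v) : ThetaB d c B x s ≤ ThetaB d c B x s' := by
  unfold ThetaB
  rw [Finset.fold_max_le]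
  refine ⟨fold_max_nonneg _ _, fun v' hv' => ?_⟩
  have hv's' : v' ∈ B.filter (fun v' => 0 < Wgt d B x v' s') := by
    simp only [Finset.mem_filter] at hv' ⊢
    exact ⟨hv'.1, lt_of_lt_of_le hv'.2 (Wgt_mono h)⟩
  rw [Finset.le_fold_max]
  refine Or.inr ⟨v', hv's', ?_⟩
  exact add_le_add le_rfl (div_le_div_of_nonneg_right (Wgt_mono h) hc.le)

lemma Theta_mono {d : V → V → ℝ} {c : ℝ} (hc : 0 < c) {W : Finset V} {x : V}
    {s s' : V → ℝ} (h : ∀ v, s v ≤ s' v) :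
    Theta G d c W x s ≤ Theta G d c W x s' :=
  fold_max_mono _ _ _ fun v _ => ThetaB_mono hc h

lemma ThetaPart_mono {d : V → V → ℝ} {c : ℝ} (hc : 0 < c) {k : ℕ}
    {P : Fin k → Finset V} {X : Fin k → V} {s s' : V → ℝ} (h : ∀ v, s v ≤ s' v) :
    ThetaPart G d c P X s ≤ ThetaPart G d c P X s' :=
  fold_max_mono _ _ _ fun i _ => Theta_mono hc h

lemma ThetaPart_nonneg {d : V → V → ℝ} {c : ℝ} {k : ℕ}
    {P : Fin k → Finset V} {X : Fin k → V} {s : V → ℝ} :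
    (0 : ℝ) ≤ ThetaPart G d c P X s :=
  fold_max_nonneg _ _

lemma ThetaOpt_mono {d : V → V → ℝ} {c : ℝ} (hc : 0 < c) {k : ℕ}
    {s s' : V → ℝ} (h : ∀ v, s v ≤ s' v) :
    ThetaOpt G d c k s ≤ ThetaOpt G d c k s' := by
  unfold ThetaOpt
  by_cases hex : ∃ (P : Fin k → Finset V) (X : Fin k → V), ValidPartition G P X
  · obtain ⟨P0, X0, hPX0⟩ := hex
    refine le_csInf ⟨ThetaPart G d c P0 X0 s', P0, X0, hPX0, rfl⟩ ?_
    rintro t ⟨P, X, hPX, rfl⟩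
    refine le_trans (csInf_le ⟨0, ?_⟩ ⟨P, X, hPX, rfl⟩) (ThetaPart_mono hc h)
    rintro t ⟨P1, X1, _, rfl⟩
    exact ThetaPart_nonneg
  · have he : ∀ s0 : V → ℝ, {t | ∃ (P : Fin k → Finset V) (X : Fin k → V),
        ValidPartition G P X ∧ t = ThetaPart G d c P X s0} = (∅ : Set ℝ) := by
      intro s0
      ext t
      simp only [Set.mem_setOf_eq, Set.mem_empty_iff_false, iff_false]
      rintro ⟨P, X, hPX, _⟩
      exact hex ⟨P, X, hPX⟩
    rw [he s, he s']

lemma Wgt_congr {d : V → V → ℝ} {W : Finset V} {x v' : V} {s s' : V → ℝ}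
    (h : ∀ v ∈ W, s v = s' v) : Wgt d W x v' s = Wgt d W x v' s' :=
  Finset.sum_congr rfl fun v hv => h v (Finset.filter_subset _ _ hv)

lemma ThetaB_congr {d : V → V → ℝ} {c : ℝ} {B : Finset V} {x : V} {s s' : V → ℝ}
    (h : ∀ v ∈ B, s v = s' v) : ThetaB d c B x s = ThetaB d c B x s' := by
  unfold ThetaB
  have hW : ∀ v', Wgt d B x v' s = Wgt d B x v' s' := fun v' => Wgt_congr h
  have : B.filter (fun v' => 0 < Wgt d B x v' s)
      = B.filter (fun v' => 0 < Wgt d B x v' s') := by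
    apply Finset.filter_congr
    intro v' _
    rw [hW v']
  rw [this]
  exact Finset.fold_congr fun v' _ => by rw [hW v']

lemma Theta_congr {d : V → V → ℝ} {c : ℝ} {W : Finset V} {x : V} {s s' : V → ℝ}
    (h : ∀ v ∈ W.erase x, s v = s' v) : Theta G d c W x s = Theta G d c W x s' := by
  unfold Theta
  exact Finset.fold_congr fun v hv =>
    ThetaB_congr fun w hw => h w (branchOf_subset W x v hw)

lemma sStar_empty (wm wp : V → ℝ) : sStar wm wp (∅ : Finset V) = wm := by
  funext v; simp [sStar]

lemma wm_le_sStar {wm wp : V → ℝ} (hw : ∀ v, 0 ≤ wm v ∧ wm v ≤ wp v) (U : Finset V) :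
    ∀ v, wm v ≤ sStar wm wp U v := by
  intro v
  unfold sStar
  split
  · exact (hw v).2
  · exact le_rfl

lemma sStarSet_finite (d : V → V → ℝ) (wm wp : V → ℝ) (V' : Finset V) (x : V) :
    (SStarSet G d wm wp V' x).Finite := by
  unfold SStarSet
  apply Set.Finite.insert
  have : {f | ∃ v' ∈ V'.erase x, f = sStar wm wp (Dset d (branchOf G V' x v') x v')}
      = (fun v' => sStar wm wp (Dset d (branchOf G V' x v') x v')) '' ↑(V'.erase x) := by
    ext f
    simp only [Set.mem_setOf_eq, Set.mem_image, Finset.mem_coe]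
    constructor
    · rintro ⟨v', hv', rfl⟩; exact ⟨v', hv', rfl⟩
    · rintro ⟨v', hv', rfl⟩; exact ⟨v', hv', rfl⟩
  rw [this]
  exact Set.Finite.image _ (Finset.finite_toSet _)

end Aux

/-- for every branch `V_ℓ` of `V'` falling off of `x`, the maximum of
`r'(V_ℓ ∪ {x}, x : s) = Θ(V_ℓ ∪ {x}, x : s) − Θ_OPT(s)` over `s ∈ S*(V_ℓ ∪ {x}, x)`
equals its maximum over the larger set `s ∈ S*(V', x)`. -/
theorem branch_max_over_larger_scenario_set {V : Type*} [Fintype V] [DecidableEq V]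
    (G : SimpleGraph V) (hG : G.IsTree) (d : V → V → ℝ) (c : ℝ) (hc : 0 < c)
    (k : ℕ) (wm wp : V → ℝ) (hw : ∀ v, 0 ≤ wm v ∧ wm v ≤ wp v)
    (V' : Finset V) (hsub : IsSubtree G V') (x : V) (hx : x ∈ V')
    (b : V) (hb : b ∈ V'.erase x) :
    sSup {t | ∃ s ∈ SStarSet G d wm wp (insert x (branchOf G V' x b)) x,
        t = Theta G d c (insert x (branchOf G V' x b)) x s - ThetaOpt G d c k s} =
    sSup {t | ∃ s ∈ SStarSet G d wm wp V' x,
        t = Theta G d c (insert x (branchOf G V' x b)) x s - ThetaOpt G d c k s} := by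
  set B := branchOf G V' x b with hB
  set W := insert x B with hW
  have hxB : x ∉ B := notMem_branchOf V' x b
  have hBsub : B ⊆ V'.erase x := branchOf_subset V' x b
  have herase : W.erase x = B := Finset.erase_insert hxB
  set f : (V → ℝ) → ℝ := fun s => Theta G d c W x s - ThetaOpt G d c k s with hf
  have himA : {t | ∃ s ∈ SStarSet G d wm wp W x, t = f s} = f '' SStarSet G d wm wp W x := by
    ext t; simp [eq_comm]
  have himC : {t | ∃ s ∈ SStarSet G d wm wp V' x, t = f s} = f '' SStarSet G d wm wp V' x := by
    ext t; simp [eq_comm]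
  have hAfin : ({t | ∃ s ∈ SStarSet G d wm wp W x, t = f s}).Finite := by
    rw [himA]; exact Set.Finite.image _ (sStarSet_finite d wm wp W x)
  have hCfin : ({t | ∃ s ∈ SStarSet G d wm wp V' x, t = f s}).Finite := by
    rw [himC]; exact Set.Finite.image _ (sStarSet_finite d wm wp V' x)
  have hs0A : sStar wm wp ∅ ∈ SStarSet G d wm wp W x := Set.mem_insert _ _
  have hs0C : sStar wm wp ∅ ∈ SStarSet G d wm wp V' x := Set.mem_insert _ _
  have hAne : ({t | ∃ s ∈ SStarSet G d wm wp W x, t = f s}).Nonempty :=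
    ⟨f (sStar wm wp ∅), sStar wm wp ∅, hs0A, rfl⟩
  have hCne : ({t | ∃ s ∈ SStarSet G d wm wp V' x, t = f s}).Nonempty :=
    ⟨f (sStar wm wp ∅), sStar wm wp ∅, hs0C, rfl⟩
  -- the small scenario set is contained in the large one
  have hsub' : SStarSet G d wm wp W x ⊆ SStarSet G d wm wp V' x := by
    rintro s (rfl | ⟨v', hv', rfl⟩)
    · exact hs0C
    · rw [herase] at hv'
      right
      refine ⟨v', hBsub hv', ?_⟩
      have h1 : branchOf G W x v' = branchOf G V' x v' := branchOf_insert_eq hv'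
      rw [h1]
  apply le_antisymm
  · apply csSup_le_csSup (hCfin.bddAbove) hAne
    rintro t ⟨s, hs, rfl⟩
    exact ⟨s, hsub' hs, rfl⟩
  · apply csSup_le hCne
    rintro t ⟨s, hs, rfl⟩
    rcases hs with rfl | ⟨v', hv', rfl⟩
    · exact le_csSup hAfin.bddAbove ⟨sStar wm wp ∅, hs0A, rfl⟩
    · by_cases hv'B : v' ∈ B
      · -- the scenario already belongs to the small set
        apply le_csSup hAfin.bddAbove
        refine ⟨_, ?_, rfl⟩
        right
        refine ⟨v', ?_, ?_⟩
        · rw [herase]; exact hv'B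
        · have h1 : branchOf G W x v' = branchOf G V' x v' := branchOf_insert_eq hv'B
          rw [h1]
      · -- the scenario is dominated by `s*(∅)`
        set s := sStar wm wp (Dset d (branchOf G V' x v') x v') with hsdef
        have hθ : Theta G d c W x s = Theta G d c W x (sStar wm wp ∅) := by
          apply Theta_congr
          intro v hv
          rw [herase] at hv
          have hvD : v ∉ Dset d (branchOf G V' x v') x v' := by
            intro hvD
            have hvbr : v ∈ branchOf G V' x v' := Finset.filter_subset _ _ hvD
            exact branchOf_disjoint hv' hv'B hvbr hv
          simp [hsdef, sStar, hvD]
        have hopt : ThetaOpt G d c k (sStar wm wp ∅) ≤ ThetaOpt G d c k s := by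
          apply ThetaOpt_mono hc
          rw [sStar_empty]
          exact wm_le_sStar hw _
        have : f s ≤ f (sStar wm wp ∅) := by
          simp only [hf]
          rw [hθ]
          linarith
        exact le_trans this (le_csSup hAfin.bddAbove ⟨sStar wm wp ∅, hs0A, rfl⟩)
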